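/- Let α > 0 and let x ≠ 0 satisfy ‖P_Ess(Ax)‖ ≤ α·‖P_Ecu(Ax)‖ (the flow direction at x lies in the α-cone of Ecu). Then for every t ≥ 0 and every v ∈ Ess with v ⊥ Ax: ‖ψ*_t(x)v‖ ≤ C²·√(1+α²)·exp(−(λ_c − λ_ss)·t)·‖v‖. In particular the scaled linear Poincaré flow is uniformly exponentially contracting on strong-stable normal directions along orbits whose flow direction lies in the center-unstable cone (linear-model form of Lemma 3.7). -/

import Mathlib

/-!
The scaling factor `‖Ax‖ / ‖A φ_t x‖` is controlled by the `Ecu`-component `u` of `Ax`. The cone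
condition gives `‖Ax‖ ≤ √(1 + α²) ‖u‖`. Since `A` preserves both `Ess` and `Ecu = Essᗮ`, it
commutes with the orthogonal projection onto `Ecu`, hence so does `exp (tA)`; so the
`Ecu`-component of `A φ_t x = exp (tA) (Ax)` is `exp (tA) u`, of norm at least
`C⁻¹ e^{λ_c t} ‖u‖`. Projecting onto the normal space does not increase norms, and
`exp (tA)` expands `v ∈ Ess` by at most `C e^{λ_ss t}`.
-/

open NormedSpace RealInnerProductSpace

/-- The scaled linear Poincaré flow of the linear flow `exp (t • A)`:
`ψ*_t(x) v = (‖Ax‖/‖A φ_t x‖) • π_{φ_t x} (exp (t • A) v)`, where `π_y` is the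
orthogonal projection onto `N_y = (ℝ ∙ A y)ᗮ`. -/
noncomputable def scaledLPF {d : ℕ}
    (A : EuclideanSpace ℝ (Fin d) →L[ℝ] EuclideanSpace ℝ (Fin d))
    (t : ℝ) (x v : EuclideanSpace ℝ (Fin d)) : EuclideanSpace ℝ (Fin d) :=
  (‖A x‖ / ‖A (exp (t • A) x)‖) •
    ((Submodule.orthogonalProjectionOnto (ℝ ∙ (A (exp (t • A) x)))ᗮ (exp (t • A) v) :
      EuclideanSpace ℝ (Fin d)))

variable {E : Type*} [NormedAddCommGroup E] [InnerProductSpace ℝ E]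

theorem Submodule.commute_starProjection_of_invariant (K : Submodule ℝ E)
    [K.HasOrthogonalProjection] {T : E →L[ℝ] E} (hK : ∀ v ∈ K, T v ∈ K)
    (hKperp : ∀ v ∈ Kᗮ, T v ∈ Kᗮ) : Commute K.starProjection T :=
  (ContinuousLinearMap.IsIdempotentElem.commute_iff K.isIdempotentElem_starProjection).2
    ⟨by rwa [K.range_starProjection], by rwa [K.ker_starProjection]⟩

theorem Submodule.norm_le_sqrt_one_add_sq_mul_of_norm_starProjection_le
    (K : Submodule ℝ E) [K.HasOrthogonalProjection] {α : ℝ} {w : E}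
    (hw : ‖K.starProjection w‖ ≤ α * ‖Kᗮ.starProjection w‖) :
    ‖w‖ ≤ √(1 + α ^ 2) * ‖Kᗮ.starProjection w‖ := by
  have hsq : ‖w‖ ^ 2 ≤ (1 + α ^ 2) * ‖Kᗮ.starProjection w‖ ^ 2 := by
    rw [K.norm_sq_eq_add_norm_sq_starProjection w]
    nlinarith [pow_le_pow_left₀ (norm_nonneg _) hw 2]
  calc ‖w‖ ≤ √((1 + α ^ 2) * ‖Kᗮ.starProjection w‖ ^ 2) := Real.le_sqrt_of_sq_le hsq
    _ = √(1 + α ^ 2) * ‖Kᗮ.starProjection w‖ := by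
      rw [Real.sqrt_mul (by positivity), Real.sqrt_sq (norm_nonneg _)]

theorem norm_div_norm_apply_exp_smul_le {A : E →L[ℝ] E} {K : Submodule ℝ E}
    [K.HasOrthogonalProjection] {C lamC α t : ℝ} (hC : 0 < C)
    (hK : ∀ v ∈ K, A v ∈ K) (hKperp : ∀ v ∈ Kᗮ, A v ∈ Kᗮ)
    (hcu : ∀ v ∈ Kᗮ, C⁻¹ * Real.exp (lamC * t) * ‖v‖ ≤ ‖exp (t • A) v‖) {x : E}
    (hdir : ‖K.starProjection (A x)‖ ≤ α * ‖Kᗮ.starProjection (A x)‖) :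
    ‖A x‖ / ‖A (exp (t • A) x)‖ ≤ C * √(1 + α ^ 2) * Real.exp (-lamC * t) := by
  set Φ := exp (t • A)
  set u := Kᗮ.starProjection (A x)
  have hPA : Commute Kᗮ.starProjection A := by
    rw [K.starProjection_orthogonal']
    exact (Commute.one_left A).sub_left (K.commute_starProjection_of_invariant hK hKperp)
  have hflow : Kᗮ.starProjection (A (Φ x)) = Φ u := by
    have hAΦ : Commute A Φ := ((Commute.refl A).smul_right t).exp_right
    have hPΦ : Commute Kᗮ.starProjection Φ := (hPA.smul_right t).exp_right
    change (Kᗮ.starProjection * (A * Φ)) x = (Φ * (Kᗮ.starProjection * A)) x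
    rw [hAΦ.eq, ← mul_assoc, ← mul_assoc, hPΦ.eq]
  have hu : ‖u‖ ≤ C * Real.exp (-lamC * t) * ‖A (Φ x)‖ := by
    calc ‖u‖ = C * Real.exp (-lamC * t) * (C⁻¹ * Real.exp (lamC * t) * ‖u‖) := by
          rw [neg_mul, Real.exp_neg]; field_simp
      _ ≤ C * Real.exp (-lamC * t) * ‖Φ u‖ := by
          gcongr; exact hcu u (Kᗮ.starProjection_apply_mem _)
      _ ≤ C * Real.exp (-lamC * t) * ‖A (Φ x)‖ := by
          gcongr; rw [← hflow]; exact Kᗮ.norm_starProjection_apply_le _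
  refine div_le_of_le_mul₀ (norm_nonneg _) (by positivity) ?_
  calc ‖A x‖ ≤ √(1 + α ^ 2) * ‖u‖ := K.norm_le_sqrt_one_add_sq_mul_of_norm_starProjection_le hdir
    _ ≤ √(1 + α ^ 2) * (C * Real.exp (-lamC * t) * ‖A (Φ x)‖) := by gcongr
    _ = _ := by ring

theorem norm_scaledLPF_le {d : ℕ} (A : EuclideanSpace ℝ (Fin d) →L[ℝ] EuclideanSpace ℝ (Fin d))
    (t : ℝ) (x v : EuclideanSpace ℝ (Fin d)) :
    ‖scaledLPF A t x v‖ ≤ ‖A x‖ / ‖A (exp (t • A) x)‖ * ‖exp (t • A) v‖ := by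
  rw [scaledLPF, norm_smul, Real.norm_of_nonneg (by positivity)]
  gcongr
  exact Submodule.norm_starProjection_apply_le _ _

theorem scaledLPF_contracts_strong_stable_general {d : ℕ}
    (A : EuclideanSpace ℝ (Fin d) →L[ℝ] EuclideanSpace ℝ (Fin d))
    (Ess : Submodule ℝ (EuclideanSpace ℝ (Fin d)))
    (C lamSS lamC : ℝ) (hC : 1 ≤ C)
    (hinvs : ∀ v ∈ Ess, A v ∈ Ess) (hinvcu : ∀ v ∈ Essᗮ, A v ∈ Essᗮ)
    (hss : ∀ v ∈ Ess, ∀ t : ℝ, 0 ≤ t →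
      ‖exp (t • A) v‖ ≤ C * Real.exp (lamSS * t) * ‖v‖)
    (hcu : ∀ v ∈ Essᗮ, ∀ t : ℝ, 0 ≤ t →
      C⁻¹ * Real.exp (lamC * t) * ‖v‖ ≤ ‖exp (t • A) v‖)
    (α : ℝ)
    (x : EuclideanSpace ℝ (Fin d))
    (hdir : ‖(Submodule.orthogonalProjectionOnto Ess (A x) : EuclideanSpace ℝ (Fin d))‖ ≤
      α * ‖(Submodule.orthogonalProjectionOnto Essᗮ (A x) : EuclideanSpace ℝ (Fin d))‖) :
    ∀ t : ℝ, 0 ≤ t → ∀ v ∈ Ess, ⟪v, A x⟫ = 0 →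
      ‖scaledLPF A t x v‖ ≤
        C ^ 2 * Real.sqrt (1 + α ^ 2) * Real.exp (-(lamC - lamSS) * t) * ‖v‖ := by
  intro t ht v hv _
  have hratio := norm_div_norm_apply_exp_smul_le (zero_lt_one.trans_le hC) hinvs hinvcu
    (fun u hu => hcu u hu t ht) hdir
  calc ‖scaledLPF A t x v‖ ≤ ‖A x‖ / ‖A (exp (t • A) x)‖ * ‖exp (t • A) v‖ :=
        norm_scaledLPF_le A t x v
    _ ≤ (C * √(1 + α ^ 2) * Real.exp (-lamC * t)) * (C * Real.exp (lamSS * t) * ‖v‖) :=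
        mul_le_mul hratio (hss v hv t ht) (norm_nonneg _) (by positivity)
    _ = C ^ 2 * √(1 + α ^ 2) * Real.exp (-(lamC - lamSS) * t) * ‖v‖ := by
        rw [show -(lamC - lamSS) * t = -lamC * t + lamSS * t by ring, Real.exp_add]
        ring

/-- Linear-model form of Lemma 3.7: near a Lorenz-like singularity (orthogonal
`A`-invariant splitting `E = Ess ⊕ Ecu` with rates `λ_ss < λ_c`), at a point `x ≠ 0`
whose flow direction lies in the `α`-cone of `Ecu`, the scaled linear Poincaré flow
contracts strong-stable normal directions uniformly exponentially:
`‖ψ*_t(x)v‖ ≤ C²·√(1+α²)·exp(−(λ_c − λ_ss)t)·‖v‖` for `v ∈ Ess`, `v ⊥ Ax`, `t ≥ 0`. -/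
theorem scaledLPF_contracts_strong_stable {d : ℕ}
    (A : EuclideanSpace ℝ (Fin d) →L[ℝ] EuclideanSpace ℝ (Fin d))
    (hA : Function.Bijective A)
    (Ess : Submodule ℝ (EuclideanSpace ℝ (Fin d)))
    (C lamSS lamC : ℝ) (hC : 1 ≤ C) (hlam : lamSS < lamC)
    (hinvs : ∀ v ∈ Ess, A v ∈ Ess) (hinvcu : ∀ v ∈ Essᗮ, A v ∈ Essᗮ)
    (hss : ∀ v ∈ Ess, ∀ t : ℝ, 0 ≤ t →
      ‖exp (t • A) v‖ ≤ C * Real.exp (lamSS * t) * ‖v‖)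
    (hcu : ∀ v ∈ Essᗮ, ∀ t : ℝ, 0 ≤ t →
      C⁻¹ * Real.exp (lamC * t) * ‖v‖ ≤ ‖exp (t • A) v‖)
    (α : ℝ) (hα : 0 < α)
    (x : EuclideanSpace ℝ (Fin d)) (hx : x ≠ 0)
    (hdir : ‖(Submodule.orthogonalProjectionOnto Ess (A x) : EuclideanSpace ℝ (Fin d))‖ ≤
      α * ‖(Submodule.orthogonalProjectionOnto Essᗮ (A x) : EuclideanSpace ℝ (Fin d))‖) :
    ∀ t : ℝ, 0 ≤ t → ∀ v ∈ Ess, ⟪v, A x⟫ = 0 →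
      ‖scaledLPF A t x v‖ ≤
        C ^ 2 * Real.sqrt (1 + α ^ 2) * Real.exp (-(lamC - lamSS) * t) * ‖v‖ :=
  scaledLPF_contracts_strong_stable_general A Ess C lamSS lamC hC hinvs hinvcu hss hcu α x hdir
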